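/- The combination of school-level diversity and balanced-exchange policies, Ξ^{DB} = {ξ ∈ Ξ^0 : ∀(c,t), p_c^t ≤ ξ_c^t ≤ q_c^t, and ∀d ∈ D, Σ_{t, c : d(c)=d} ξ_c^t = k_d}, is M-convex (hence M♮-convex). -/
import Mathlib

variable {C T : Type*} [Fintype C] [Fintype T] [DecidableEq C] [DecidableEq T]

/-- The unit vector with a 1 in coordinate `(c, t)` and 0 elsewhere. -/
def chi (c : C) (t : T) : C × T → ℕ := fun p => if p = (c, t) then 1 else 0

/-- A distribution is feasible if each school's total is within its capacity. -/
def Feasible (q : C → ℕ) (ξ : C × T → ℕ) : Prop := ∀ c, (∑ t, ξ (c, t)) ≤ q c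

/-- M♮-convexity of a set of distributions. -/
def MNatConvex (Ξ : Set (C × T → ℕ)) : Prop :=
  ∀ ξ ξ', ξ ∈ Ξ → ξ' ∈ Ξ → ∀ c t, ξ' (c, t) < ξ (c, t) →
    ((ξ - chi c t) ∈ Ξ ∧ (ξ' + chi c t) ∈ Ξ) ∨
    ∃ c' t', ξ (c', t') < ξ' (c', t') ∧
      (ξ - chi c t + chi c' t') ∈ Ξ ∧ (ξ' + chi c t - chi c' t') ∈ Ξ

/-- M-convexity of a set of distributions. -/
def MConvex (Ξ : Set (C × T → ℕ)) : Prop :=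
  ∀ ξ ξ', ξ ∈ Ξ → ξ' ∈ Ξ → ∀ c t, ξ' (c, t) < ξ (c, t) →
    ∃ c' t', ξ (c', t') < ξ' (c', t') ∧
      (ξ - chi c t + chi c' t') ∈ Ξ ∧ (ξ' + chi c t - chi c' t') ∈ Ξ

/-- Pseudo M♮-concavity of a distributional objective (defined on feasible distributions). -/
def PseudoMNatConcave (q : C → ℕ) (f : (C × T → ℕ) → ℝ) : Prop :=
  ∀ ξ ξ', Feasible q ξ → Feasible q ξ' → ∀ c t, ξ' (c, t) < ξ (c, t) →
    (Feasible q (ξ - chi c t) ∧ Feasible q (ξ' + chi c t) ∧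
      min (f ξ) (f ξ') ≤ min (f (ξ - chi c t)) (f (ξ' + chi c t))) ∨
    ∃ c' t', ξ (c', t') < ξ' (c', t') ∧
      Feasible q (ξ - chi c t + chi c' t') ∧ Feasible q (ξ' + chi c t - chi c' t') ∧
      min (f ξ) (f ξ') ≤ min (f (ξ - chi c t + chi c' t')) (f (ξ' + chi c t - chi c' t'))

section Aux

lemma sum_chi (c : C) (t : T) (c₀ : C) :
    ∑ s, chi c t (c₀, s) = if c₀ = c then 1 else 0 := by
  simp [chi, Prod.ext_iff]
  split_ifs with h <;> simp [h, Finset.filter_eq']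

lemma chi_le (ξ : C × T → ℕ) (c : C) (t : T) (h1 : 1 ≤ ξ (c, t)) (p : C × T) :
    chi c t p ≤ ξ p := by
  unfold chi; split_ifs with h
  · subst h; exact h1
  · exact Nat.zero_le _

lemma single_le_sum' (ξ : C × T → ℕ) (c₀ : C) (t : T) :
    ξ (c₀, t) ≤ ∑ s, ξ (c₀, s) :=
  Finset.single_le_sum (f := fun s => ξ (c₀, s)) (fun i _ => Nat.zero_le _)
    (Finset.mem_univ t)

lemma sum_exch (ξ : C × T → ℕ) (c c' : C) (t t' : T) (h1 : 1 ≤ ξ (c, t)) (c₀ : C) :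
    ∑ s, (ξ - chi c t + chi c' t') (c₀, s) + (if c₀ = c then 1 else 0)
      = ∑ s, ξ (c₀, s) + (if c₀ = c' then 1 else 0) := by
  simp only [Pi.add_apply, Pi.sub_apply]
  rw [Finset.sum_add_distrib,
    Finset.sum_tsub_distrib _ (fun s _ => chi_le ξ c t h1 (c₀, s)),
    sum_chi, sum_chi]
  have hle : (if c₀ = c then 1 else 0) ≤ ∑ s, ξ (c₀, s) := by
    split_ifs with h
    · have : 1 ≤ ξ (c₀, t) := by rw [h]; exact h1
      exact le_trans this (single_le_sum' ξ c₀ t)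
    · exact Nat.zero_le _
  omega

lemma sum_exch' (ξ' : C × T → ℕ) (c c' : C) (t t' : T) (h1 : 1 ≤ ξ' (c', t')) (c₀ : C) :
    ∑ s, (ξ' + chi c t - chi c' t') (c₀, s) + (if c₀ = c' then 1 else 0)
      = ∑ s, ξ' (c₀, s) + (if c₀ = c then 1 else 0) := by
  simp only [Pi.add_apply, Pi.sub_apply]
  have hp : ∀ s ∈ (Finset.univ : Finset T),
      chi c' t' (c₀, s) ≤ ξ' (c₀, s) + chi c t (c₀, s) :=
    fun s _ => le_trans (chi_le ξ' c' t' h1 (c₀, s)) (Nat.le_add_right _ _)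
  rw [Finset.sum_tsub_distrib _ hp, Finset.sum_add_distrib, sum_chi, sum_chi]
  have hle : (if c₀ = c' then 1 else 0) ≤ ∑ s, ξ' (c₀, s) := by
    split_ifs with h
    · have : 1 ≤ ξ' (c₀, t') := by rw [h]; exact h1
      exact le_trans this (single_le_sum' ξ' c₀ t')
    · exact Nat.zero_le _
  omega

variable {D : Type*} [Fintype D] [DecidableEq D]

lemma indicator_sum (dmap : C → D) (d₀ : D) (c : C) :
    (∑ c₀ ∈ Finset.univ.filter (fun c₀ => dmap c₀ = d₀), (if c₀ = c then 1 else 0))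
      = if dmap c = d₀ then 1 else 0 := by
  rw [Finset.sum_ite_eq' (Finset.univ.filter (fun c₀ => dmap c₀ = d₀)) c (fun _ => 1)]
  simp

lemma exch_mem (q : C → ℕ) (pfl pcl : C × T → ℕ)
    (dmap : C → D) (k : D → ℕ) (ξ ξ' : C × T → ℕ)
    (hξ : Feasible q ξ ∧ (∀ c t, pfl (c, t) ≤ ξ (c, t) ∧ ξ (c, t) ≤ pcl (c, t)) ∧
      ∀ d' : D, (∑ c ∈ Finset.univ.filter (fun c => dmap c = d'), ∑ t, ξ (c, t)) = k d')
    (hξ' : Feasible q ξ' ∧ (∀ c t, pfl (c, t) ≤ ξ' (c, t) ∧ ξ' (c, t) ≤ pcl (c, t)) ∧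
      ∀ d' : D, (∑ c ∈ Finset.univ.filter (fun c => dmap c = d'), ∑ t, ξ' (c, t)) = k d')
    (c c' : C) (t t' : T) (hd : dmap c' = dmap c)
    (hlt : ξ' (c, t) < ξ (c, t)) (hlt' : ξ (c', t') < ξ' (c', t'))
    (hcc : c' = c ∨ ((∑ s, ξ' (c, s)) < ∑ s, ξ (c, s) ∧ (∑ s, ξ (c', s)) < ∑ s, ξ' (c', s))) :
    (Feasible q (ξ - chi c t + chi c' t') ∧
      (∀ c₀ t₀, pfl (c₀, t₀) ≤ (ξ - chi c t + chi c' t') (c₀, t₀) ∧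
        (ξ - chi c t + chi c' t') (c₀, t₀) ≤ pcl (c₀, t₀)) ∧
      ∀ d' : D, (∑ c₀ ∈ Finset.univ.filter (fun c₀ => dmap c₀ = d'),
        ∑ s, (ξ - chi c t + chi c' t') (c₀, s)) = k d') ∧
    (Feasible q (ξ' + chi c t - chi c' t') ∧
      (∀ c₀ t₀, pfl (c₀, t₀) ≤ (ξ' + chi c t - chi c' t') (c₀, t₀) ∧
        (ξ' + chi c t - chi c' t') (c₀, t₀) ≤ pcl (c₀, t₀)) ∧
      ∀ d' : D, (∑ c₀ ∈ Finset.univ.filter (fun c₀ => dmap c₀ = d'),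
        ∑ s, (ξ' + chi c t - chi c' t') (c₀, s)) = k d') := by
  have h1 : 1 ≤ ξ (c, t) := by omega
  have h1' : 1 ≤ ξ' (c', t') := by omega
  have hne : (c, t) ≠ (c', t') := by
    intro h
    rw [h] at hlt
    omega
  obtain ⟨hF, hB, hD⟩ := hξ
  obtain ⟨hF', hB', hD'⟩ := hξ'
  refine ⟨⟨?_, ?_, ?_⟩, ?_, ?_, ?_⟩
  · -- Feasible ν
    intro c₀
    have e := sum_exch ξ c c' t t' h1 c₀
    have f0 := hF c₀
    by_cases h2 : c₀ = c'
    · rw [h2] at e ⊢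
      by_cases h3 : c' = c
      · rw [if_pos h3, if_pos rfl] at e
        have := hF c'
        omega
      · rcases hcc with h | ⟨hA, hB2⟩
        · exact absurd h h3
        · rw [if_neg h3, if_pos rfl] at e
          have := hF' c'
          omega
    · rw [if_neg h2] at e
      by_cases h3 : c₀ = c
      · rw [if_pos h3] at e; omega
      · rw [if_neg h3] at e; omega
  · -- box ν
    intro c₀ t₀
    simp only [Pi.add_apply, Pi.sub_apply, chi]
    by_cases e1 : (c₀, t₀) = (c, t)
    · have e2 : (c₀, t₀) ≠ (c', t') := by rw [e1]; exact hne
      rw [if_pos e1, if_neg e2, e1]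
      have b1 := hB c t
      have b2 := hB' c t
      omega
    · by_cases e2 : (c₀, t₀) = (c', t')
      · rw [if_neg e1, if_pos e2, e2]
        have b1 := hB c' t'
        have b2 := hB' c' t'
        omega
      · rw [if_neg e1, if_neg e2]
        have b1 := hB c₀ t₀
        omega
  · -- district ν
    intro d₀
    have e : ∑ c₀ ∈ Finset.univ.filter (fun c₀ => dmap c₀ = d₀),
        (∑ s, (ξ - chi c t + chi c' t') (c₀, s) + (if c₀ = c then 1 else 0))
        = ∑ c₀ ∈ Finset.univ.filter (fun c₀ => dmap c₀ = d₀),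
        (∑ s, ξ (c₀, s) + (if c₀ = c' then 1 else 0)) :=
      Finset.sum_congr rfl (fun c₀ _ => sum_exch ξ c c' t t' h1 c₀)
    rw [Finset.sum_add_distrib, Finset.sum_add_distrib, indicator_sum,
      indicator_sum, hd] at e
    have hk := hD d₀
    omega
  · -- Feasible μ
    intro c₀
    have e := sum_exch' ξ' c c' t t' h1' c₀
    have f0 := hF' c₀
    by_cases h2 : c₀ = c
    · rw [h2] at e ⊢
      by_cases h3 : c = c'
      · rw [if_pos h3, if_pos rfl] at e
        have := hF' c
        omega
      · rcases hcc with h | ⟨hA, hB2⟩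
        · exact absurd h.symm h3
        · rw [if_neg h3, if_pos rfl] at e
          have := hF c
          omega
    · rw [if_neg h2] at e
      by_cases h3 : c₀ = c'
      · rw [if_pos h3] at e; omega
      · rw [if_neg h3] at e; omega
  · -- box μ
    intro c₀ t₀
    simp only [Pi.add_apply, Pi.sub_apply, chi]
    by_cases e1 : (c₀, t₀) = (c, t)
    · have e2 : (c₀, t₀) ≠ (c', t') := by rw [e1]; exact hne
      rw [if_pos e1, if_neg e2, e1]
      have b1 := hB c t
      have b2 := hB' c t
      omega
    · by_cases e2 : (c₀, t₀) = (c', t')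
      · rw [if_neg e1, if_pos e2, e2]
        have b1 := hB c' t'
        have b2 := hB' c' t'
        omega
      · rw [if_neg e1, if_neg e2]
        have b1 := hB' c₀ t₀
        omega
  · -- district μ
    intro d₀
    have e : ∑ c₀ ∈ Finset.univ.filter (fun c₀ => dmap c₀ = d₀),
        (∑ s, (ξ' + chi c t - chi c' t') (c₀, s) + (if c₀ = c' then 1 else 0))
        = ∑ c₀ ∈ Finset.univ.filter (fun c₀ => dmap c₀ = d₀),
        (∑ s, ξ' (c₀, s) + (if c₀ = c then 1 else 0)) :=
      Finset.sum_congr rfl (fun c₀ _ => sum_exch' ξ' c c' t t' h1' c₀)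
    rw [Finset.sum_add_distrib, Finset.sum_add_distrib, indicator_sum,
      indicator_sum, hd] at e
    have hk := hD' d₀
    omega

end Aux

/-- The combination of school-level diversity and balanced-exchange
policies is M-convex (hence M♮-convex). -/
theorem diversity_balanced_mConvex {D : Type*} [Fintype D] [DecidableEq D]
    (q : C → ℕ) (pfl pcl : C × T → ℕ) (hpq : ∀ p, pfl p ≤ pcl p)
    (dmap : C → D) (k : D → ℕ) :
    MConvex {ξ : C × T → ℕ | Feasible q ξ ∧
      (∀ c t, pfl (c, t) ≤ ξ (c, t) ∧ ξ (c, t) ≤ pcl (c, t)) ∧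
      ∀ d' : D, (∑ c ∈ Finset.univ.filter (fun c => dmap c = d'), ∑ t, ξ (c, t)) = k d'} ∧
    MNatConvex {ξ : C × T → ℕ | Feasible q ξ ∧
      (∀ c t, pfl (c, t) ≤ ξ (c, t) ∧ ξ (c, t) ≤ pcl (c, t)) ∧
      ∀ d' : D, (∑ c ∈ Finset.univ.filter (fun c => dmap c = d'), ∑ t, ξ (c, t)) = k d'} := by
  have hM : MConvex {ξ : C × T → ℕ | Feasible q ξ ∧
      (∀ c t, pfl (c, t) ≤ ξ (c, t) ∧ ξ (c, t) ≤ pcl (c, t)) ∧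
      ∀ d' : D, (∑ c ∈ Finset.univ.filter (fun c => dmap c = d'), ∑ t, ξ (c, t)) = k d'} := by
    intro ξ ξ' hξ hξ' c t hlt
    simp only [Set.mem_setOf_eq] at hξ hξ' ⊢
    by_cases hcase : ∑ s, ξ (c, s) ≤ ∑ s, ξ' (c, s)
    · -- exchange within school c
      have ha := Finset.add_sum_erase Finset.univ (fun s => ξ (c, s)) (Finset.mem_univ t)
      have hb := Finset.add_sum_erase Finset.univ (fun s => ξ' (c, s)) (Finset.mem_univ t)
      have hsum : ∑ s ∈ Finset.univ.erase t, ξ (c, s)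
          < ∑ s ∈ Finset.univ.erase t, ξ' (c, s) := by
        omega
      obtain ⟨t', _, ht'⟩ := Finset.exists_lt_of_sum_lt hsum
      exact ⟨c, t', ht',
        exch_mem q pfl pcl dmap k ξ ξ' hξ hξ' c c t t' rfl hlt ht' (Or.inl rfl)⟩
    · push_neg at hcase
      have hcF : c ∈ Finset.univ.filter (fun c₀ => dmap c₀ = dmap c) := by simp
      have ha := Finset.add_sum_erase _ (fun c₀ => ∑ s, ξ (c₀, s)) hcF
      have hb := Finset.add_sum_erase _ (fun c₀ => ∑ s, ξ' (c₀, s)) hcF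
      have e1 := hξ.2.2 (dmap c)
      have e2 := hξ'.2.2 (dmap c)
      have hsum : ∑ c₀ ∈ (Finset.univ.filter (fun c₀ => dmap c₀ = dmap c)).erase c,
            ∑ s, ξ (c₀, s)
          < ∑ c₀ ∈ (Finset.univ.filter (fun c₀ => dmap c₀ = dmap c)).erase c,
            ∑ s, ξ' (c₀, s) := by
        omega
      obtain ⟨c'', hc''mem, hc''⟩ := Finset.exists_lt_of_sum_lt hsum
      have hd : dmap c'' = dmap c :=
        (Finset.mem_filter.1 (Finset.mem_of_mem_erase hc''mem)).2
      obtain ⟨t', _, ht'⟩ := Finset.exists_lt_of_sum_lt hc''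
      exact ⟨c'', t', ht',
        exch_mem q pfl pcl dmap k ξ ξ' hξ hξ' c c'' t t' hd hlt ht'
          (Or.inr ⟨hcase, hc''⟩)⟩
  refine ⟨hM, ?_⟩
  intro ξ ξ' hξ hξ' c t hlt
  exact Or.inr (hM ξ ξ' hξ hξ' c t hlt)
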